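/- arXiv:2303.13084 — 2 statements merged into one kernel-verified Lean document; each statement's English description precedes it below -/
import Mathlib

section
/- Let P ⊆ ℝ^d be a full-dimensional lattice polytope with codegree a. If P is IDP and P ∩ ℤ^d = (⌊aP⌋ ∩ ℤ^d) + ({P} ∩ ℤ^d), then P is nearly Gorenstein. -/
open Set Pointwise

/-- The set of lattice points of `ℝ^d`. -/
def latticePoints (d : ℕ) : Set (Fin d → ℝ) :=
  {x | ∀ i, ∃ z : ℤ, x i = (z : ℝ)}

/-- A lattice polytope: the convex hull of a finite set of lattice points. -/
def IsLatticePolytope {d : ℕ} (P : Set (Fin d → ℝ)) : Prop :=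
  ∃ V : Finset (Fin d → ℝ), (V : Set (Fin d → ℝ)) ⊆ latticePoints d ∧
    P = convexHull ℝ (V : Set (Fin d → ℝ))

/-- The natural pairing of an integral linear functional with a point of `ℝ^d`. -/
def pairing {d : ℕ} (n : Fin d → ℤ) (x : Fin d → ℝ) : ℝ :=
  ∑ i, (n i : ℝ) * x i

/-- `P = {x | n_F(x) ≥ -h_F}` is an irredundant presentation with primitive
integral inner normals, i.e. the facet presentation of `P`. -/
def IsFacetPresentation {d m : ℕ} (P : Set (Fin d → ℝ))
    (n : Fin m → Fin d → ℤ) (h : Fin m → ℤ) : Prop :=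
  P = {x | ∀ i, pairing (n i) x ≥ -(h i : ℝ)} ∧
  (∀ i, Finset.univ.gcd (n i) = 1) ∧
  (∀ i, ∃ x : Fin d → ℝ, pairing (n i) x < -(h i : ℝ) ∧
    ∀ j, j ≠ i → pairing (n j) x ≥ -(h j : ℝ))

/-- `a` is the codegree of `P`: the least `k ≥ 1` such that `int(kP)` contains
a lattice point. -/
def IsCodegree {d : ℕ} (P : Set (Fin d → ℝ)) (a : ℕ) : Prop :=
  1 ≤ a ∧ (interior ((a : ℝ) • P) ∩ latticePoints d).Nonempty ∧
    ∀ k : ℕ, 1 ≤ k → (interior ((k : ℝ) • P) ∩ latticePoints d).Nonempty → a ≤ k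

/-- The floor polytope `⌊R⌋ = conv(int(R) ∩ ℤ^d)`. -/
def floorPoly {d : ℕ} (R : Set (Fin d → ℝ)) : Set (Fin d → ℝ) :=
  convexHull ℝ (interior R ∩ latticePoints d)

/-- The remainder polytope `{P} = conv{x ∈ ℤ^d | n_F(x) ≥ (a-1)h_F - 1}`,
defined in terms of the facet presentation data and the codegree `a`. -/
def remPoly {d m : ℕ} (n : Fin m → Fin d → ℤ) (h : Fin m → ℤ) (a : ℕ) :
    Set (Fin d → ℝ) :=
  convexHull ℝ {x | x ∈ latticePoints d ∧
    ∀ i, pairing (n i) x ≥ ((a : ℝ) - 1) * (h i : ℝ) - 1}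

/-- The cone `C_P ⊆ ℝ^d × ℝ` over `P`, in terms of the facet presentation. -/
def coneOver {d m : ℕ} (n : Fin m → Fin d → ℤ) (h : Fin m → ℤ) :
    Set ((Fin d → ℝ) × ℝ) :=
  {p | ∀ i, pairing (n i) p.1 ≥ -(p.2 * (h i : ℝ))}

/-- The interior `int(C_P)` of the cone over `P`. -/
def intCone {d m : ℕ} (n : Fin m → Fin d → ℤ) (h : Fin m → ℤ) :
    Set ((Fin d → ℝ) × ℝ) :=
  {p | ∀ i, pairing (n i) p.1 > -(p.2 * (h i : ℝ))}

/-- The anticanonical set `ant(C_P)` of the cone over `P`. -/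
def antCone {d m : ℕ} (n : Fin m → Fin d → ℤ) (h : Fin m → ℤ) :
    Set ((Fin d → ℝ) × ℝ) :=
  {p | ∀ i, pairing (n i) p.1 ≥ -(p.2 * (h i : ℝ)) - 1}

/-- Lattice points of `ℝ^d × ℝ = ℝ^{d+1}`. -/
def latticePairs (d : ℕ) : Set ((Fin d → ℝ) × ℝ) :=
  {p | p.1 ∈ latticePoints d ∧ ∃ z : ℤ, p.2 = (z : ℝ)}

/-- The nearly Gorenstein condition with respect to a given facet presentation:
`(C_P ∩ ℤ^{d+1}) \ {0} ⊆ (int(C_P) ∩ ℤ^{d+1}) + (ant(C_P) ∩ ℤ^{d+1})`. -/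
def NGIncl {d m : ℕ} (n : Fin m → Fin d → ℤ) (h : Fin m → ℤ) : Prop :=
  (coneOver n h ∩ latticePairs d) \ {(0 : (Fin d → ℝ) × ℝ)} ⊆
    (intCone n h ∩ latticePairs d) + (antCone n h ∩ latticePairs d)

/-- A full-dimensional lattice polytope is nearly Gorenstein if the nearly
Gorenstein inclusion holds for its facet presentation. -/
def NearlyGorenstein {d : ℕ} (P : Set (Fin d → ℝ)) : Prop :=
  ∃ (m : ℕ) (n : Fin m → Fin d → ℤ) (h : Fin m → ℤ),
    IsFacetPresentation P n h ∧ NGIncl n h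

/-- The polar dual `Q* = {y | y(x) ≥ -1 for all x ∈ Q}`. -/
def polarDual {d : ℕ} (Q : Set (Fin d → ℝ)) : Set (Fin d → ℝ) :=
  {y | ∀ x ∈ Q, (∑ i, y i * x i) ≥ -1}

/-- A reflexive polytope: a lattice polytope with `0` in its interior whose
polar dual is again a lattice polytope. -/
def IsReflexive {d : ℕ} (Q : Set (Fin d → ℝ)) : Prop :=
  IsLatticePolytope Q ∧ (0 : Fin d → ℝ) ∈ interior Q ∧
    IsLatticePolytope (polarDual Q)

/-- A Gorenstein polytope: some dilate `kP`, translated by a lattice vector,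
is reflexive. -/
def IsGorenstein {d : ℕ} (P : Set (Fin d → ℝ)) : Prop :=
  ∃ (k : ℕ) (w : Fin d → ℝ), 1 ≤ k ∧ w ∈ latticePoints d ∧
    IsReflexive ((fun x => x - w) '' ((k : ℝ) • P))

/-- The integer decomposition property. -/
def IsIDP {d : ℕ} (P : Set (Fin d → ℝ)) : Prop :=
  ∀ k : ℕ, 1 ≤ k → ∀ x ∈ ((k : ℝ) • P) ∩ latticePoints d,
    ∃ y : Fin k → Fin d → ℝ, (∀ j, y j ∈ P ∩ latticePoints d) ∧ x = ∑ j, y j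

/-- Minkowski indecomposability of a lattice polytope. -/
def IsIndecomposable {d : ℕ} (P : Set (Fin d → ℝ)) : Prop :=
  (¬ ∃ p : Fin d → ℝ, P = {p}) ∧
  ∀ P₁ P₂ : Set (Fin d → ℝ), IsLatticePolytope P₁ → IsLatticePolytope P₂ →
    P = P₁ + P₂ → (∃ p, P₁ = {p}) ∨ (∃ p, P₂ = {p})

/-- A `(0,1)`-polytope: the convex hull of a set of `(0,1)`-vectors. -/
def Is01Polytope {d : ℕ} (P : Set (Fin d → ℝ)) : Prop :=
  ∃ V : Finset (Fin d → ℝ), (∀ v ∈ V, ∀ i, v i = 0 ∨ v i = 1) ∧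
    P = convexHull ℝ (V : Set (Fin d → ℝ))

/-!
A nonzero lattice point `(X, K)` of `C_P` has `K ≥ 1`: otherwise `X - K • p₀`, for `p₀` interior
to `P`, would be a recession direction of the bounded polytope `P`, forcing `(X, K) = 0`. By IDP,
`X = y₀ + ⋯ + y_{K-1}` with `yⱼ ∈ P ∩ ℤ^d`, and by hypothesis `y₀ = g + r` with `g` a lattice point
of `⌊aP⌋` and `r` one of `{P}`. Then `(g, a) ∈ int(C_P)`, and `(X - g, K - a) ∈ ant(C_P)` since
`n_F(r) ≥ (a - 1) h_F - 1` while `n_F(yⱼ) ≥ -h_F` for the other `K - 1` summands.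
-/

section Pairing

variable {d : ℕ}

def pairingₗ (n : Fin d → ℤ) : (Fin d → ℝ) →ₗ[ℝ] ℝ where
  toFun := pairing n
  map_add' x y := by simp only [pairing, Pi.add_apply, mul_add, Finset.sum_add_distrib]
  map_smul' t x := by
    simp only [pairing, Pi.smul_apply, smul_eq_mul, RingHom.id_apply, Finset.mul_sum]
    exact Finset.sum_congr rfl fun _ _ => by ring

lemma pairing_add (n : Fin d → ℤ) (x y : Fin d → ℝ) :
    pairing n (x + y) = pairing n x + pairing n y :=
  (pairingₗ n).map_add x y

lemma pairing_smul (n : Fin d → ℤ) (t : ℝ) (x : Fin d → ℝ) :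
    pairing n (t • x) = t * pairing n x :=
  (pairingₗ n).map_smul t x

lemma pairing_zero (n : Fin d → ℤ) : pairing n 0 = 0 :=
  (pairingₗ n).map_zero

lemma pairing_sum {ι : Type*} (n : Fin d → ℤ) (s : Finset ι) (y : ι → Fin d → ℝ) :
    pairing n (∑ j ∈ s, y j) = ∑ j ∈ s, pairing n (y j) :=
  map_sum (pairingₗ n) y s

lemma ne_zero_of_gcd_eq_one {n : Fin d → ℤ} (hn : Finset.univ.gcd n = 1) : n ≠ 0 := by
  rintro rfl
  have h0 : Finset.univ.gcd (0 : Fin d → ℤ) = 0 := Finset.gcd_eq_zero_iff.mpr fun _ _ => rfl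
  exact zero_ne_one (h0.symm.trans hn)

lemma pairingₗ_surjective {n : Fin d → ℤ} (hn : n ≠ 0) : Function.Surjective (pairingₗ n) := by
  obtain ⟨j, hj⟩ := Function.ne_iff.mp hn
  have hj' : (n j : ℝ) ≠ 0 := by exact_mod_cast hj
  intro t
  refine ⟨Pi.single j (t / n j), ?_⟩
  change pairing n _ = t
  simp [pairing, Pi.single_apply, mul_div_cancel₀ t hj']

lemma lt_pairing_of_mem_interior {n : Fin d → ℤ} (hn : n ≠ 0) {S : Set (Fin d → ℝ)} {c : ℝ}
    (hS : ∀ x ∈ S, c ≤ pairing n x) {x : Fin d → ℝ} (hx : x ∈ interior S) :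
    c < pairing n x := by
  have hopen := (pairingₗ n).isOpenMap_of_finiteDimensional (pairingₗ_surjective hn)
  have hsub : interior S ⊆ pairingₗ n ⁻¹' Ioi c := by
    rw [← interior_Ici, hopen.preimage_interior_eq_interior_preimage
      (pairingₗ n).continuous_of_finiteDimensional]
    exact interior_mono hS
  exact hsub hx

end Pairing

lemma Bornology.IsBounded.eq_zero_of_forall_add_smul_mem {E : Type*} [NormedAddCommGroup E] [NormedSpace ℝ E]
    {S : Set E} (hS : Bornology.IsBounded S) {p q : E} (hq : ∀ t : ℝ, 0 ≤ t → p + t • q ∈ S) :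
    q = 0 := by
  obtain ⟨R, hR⟩ := isBounded_iff_forall_norm_le.mp hS
  have hp : ‖p‖ ≤ R := by simpa using hR _ (hq 0 le_rfl)
  by_contra hq0
  have hqpos : 0 < ‖q‖ := norm_pos_iff.mpr hq0
  set t := (2 * R + 1) / ‖q‖
  have ht : 0 ≤ t := div_nonneg (by linarith [norm_nonneg p]) hqpos.le
  have htq : ‖t • q‖ = 2 * R + 1 := by
    rw [norm_smul, Real.norm_of_nonneg ht, div_mul_cancel₀ _ hqpos.ne']
  have := norm_sub_le (p + t • q) p
  rw [add_sub_cancel_left, htq] at this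
  linarith [hR _ (hq t ht)]

lemma IsLatticePolytope.isBounded {d : ℕ} {P : Set (Fin d → ℝ)} (hP : IsLatticePolytope P) :
    Bornology.IsBounded P := by
  obtain ⟨V, -, rfl⟩ := hP
  exact isBounded_convexHull.mpr V.finite_toSet.isBounded

lemma sub_mem_latticePoints {d : ℕ} {x y : Fin d → ℝ} (hx : x ∈ latticePoints d)
    (hy : y ∈ latticePoints d) : x - y ∈ latticePoints d := fun i => by
  obtain ⟨a, ha⟩ := hx i
  obtain ⟨b, hb⟩ := hy i
  exact ⟨a - b, by simp [ha, hb]⟩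

section Cone

variable {d m : ℕ} {n : Fin m → Fin d → ℤ} {h : Fin m → ℤ}

lemma ngIncl_of_isEmpty [IsEmpty (Fin m)] : NGIncl n h := by
  rintro x ⟨⟨-, hx⟩, -⟩
  exact ⟨x, ⟨isEmptyElim, hx⟩, 0, ⟨isEmptyElim, fun _ => ⟨0, by simp⟩, 0, by simp⟩, add_zero x⟩

lemma le_pairing_of_mem_remPoly {a : ℕ} {r : Fin d → ℝ} (hr : r ∈ remPoly n h a) (i : Fin m) :
    ((a : ℝ) - 1) * h i - 1 ≤ pairing (n i) r :=
  convexHull_min (fun _ hx => hx.2 i) (convex_halfSpace_ge (pairingₗ (n i)).isLinear _) hr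

variable {P : Set (Fin d → ℝ)} (hPeq : P = {x | ∀ i, pairing (n i) x ≥ -(h i : ℝ)})
include hPeq

lemma mem_smul_of_mem_coneOver {x : Fin d → ℝ} {t : ℝ} (ht : 0 < t)
    (hx : (x, t) ∈ coneOver n h) : x ∈ t • P := by
  refine ⟨t⁻¹ • x, ?_, smul_inv_smul₀ ht.ne' x⟩
  rw [hPeq]
  intro i
  rw [pairing_smul, ge_iff_le, le_inv_mul_iff₀ ht]
  linarith [hx i]

/-- If `K ≤ 0`, then `x - K • p₀` lies in the recession cone of the bounded polytope `P`. -/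
lemma eq_zero_of_mem_coneOver_of_nonpos [Nonempty (Fin m)] (hP : Bornology.IsBounded P)
    {p₀ : Fin d → ℝ} (hp₀ : ∀ i, -(h i : ℝ) < pairing (n i) p₀) {x : Fin d → ℝ} {K : ℝ}
    (hx : (x, K) ∈ coneOver n h) (hK : K ≤ 0) : (x, K) = 0 := by
  have hq : x + (-K) • p₀ = 0 := by
    refine hP.eq_zero_of_forall_add_smul_mem (p := p₀) fun t ht => ?_
    rw [hPeq]
    intro i
    have := hx i
    simp only [pairing_add, pairing_smul] at this ⊢
    have hdir : 0 ≤ pairing (n i) x + -K * pairing (n i) p₀ := by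
      linarith [mul_nonneg (neg_nonneg.mpr hK) (neg_le_iff_add_nonneg.mp (hp₀ i).le)]
    linarith [mul_nonneg ht hdir, hp₀ i]
  have hK0 : K = 0 := by
    let i : Fin m := Classical.arbitrary _
    have hpx : pairing (n i) x = K * pairing (n i) p₀ := by
      have := congrArg (pairing (n i)) hq
      rw [pairing_add, pairing_smul, pairing_zero] at this
      linarith
    have := hx i
    simp only [hpx] at this
    nlinarith [hp₀ i]
  subst hK0
  simpa using hq

lemma mem_intCone_of_mem_floorPoly (hn : ∀ i, n i ≠ 0) {t : ℝ} (ht : 0 ≤ t) {g : Fin d → ℝ}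
    (hg : g ∈ floorPoly (t • P)) : (g, t) ∈ intCone n h := by
  intro i
  have hsub : floorPoly (t • P) ⊆ {x | -(t * h i) < pairing (n i) x} := by
    refine convexHull_min (fun x hx => lt_pairing_of_mem_interior (hn i) ?_ hx.1)
      (convex_halfSpace_gt (pairingₗ (n i)).isLinear _)
    rintro _ ⟨y, hy, rfl⟩
    rw [hPeq] at hy
    rw [pairing_smul]
    linarith [mul_le_mul_of_nonneg_left (hy i) ht]
  exact hsub hg

lemma mem_antCone_of_decomposition {k a : ℕ} {y : Fin (k + 1) → Fin d → ℝ} (hy : ∀ j, y j ∈ P)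
    {g r : Fin d → ℝ} (hgr : g + r = y 0) (hr : r ∈ remPoly n h a) :
    (∑ j, y j - g, (k : ℝ) + 1 - a) ∈ antCone n h := by
  intro i
  have hsum : ∑ j, y j - g = r + ∑ j : Fin k, y j.succ := by
    rw [Fin.sum_univ_succ, ← hgr]
    abel
  have htail : (k : ℝ) * -(h i : ℝ) ≤ ∑ j : Fin k, pairing (n i) (y j.succ) := by
    have := Finset.card_nsmul_le_sum Finset.univ (fun j : Fin k => pairing (n i) (y j.succ))
      (-(h i : ℝ)) fun j _ => by have := hy j.succ; rw [hPeq] at this; exact this i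
    simpa using this
  show pairing (n i) (∑ j, y j - g) ≥ -(((k : ℝ) + 1 - a) * h i) - 1
  rw [hsum, pairing_add, pairing_sum]
  linarith [le_pairing_of_mem_remPoly hr i]

end Cone

theorem stmt_4_general {d : ℕ} (P : Set (Fin d → ℝ))
    (hP : IsLatticePolytope P) (hfull : (interior P).Nonempty)
    {m : ℕ} (n : Fin m → Fin d → ℤ) (h : Fin m → ℤ)
    (hpres : IsFacetPresentation P n h)
    (a : ℕ)
    (hidp : IsIDP P)
    (hdec : P ∩ latticePoints d =
      (floorPoly ((a : ℝ) • P) ∩ latticePoints d) +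
        (remPoly n h a ∩ latticePoints d)) :
    NGIncl n h := by
  obtain ⟨hPeq, hgcd, -⟩ := hpres
  rcases isEmpty_or_nonempty (Fin m) with hm | hm
  · exact ngIncl_of_isEmpty
  have hn i : n i ≠ 0 := ne_zero_of_gcd_eq_one (hgcd i)
  obtain ⟨p₀, hp₀⟩ := hfull
  have hp₀ i : -(h i : ℝ) < pairing (n i) p₀ :=
    lt_pairing_of_mem_interior (hn i) (fun x hx => by rw [hPeq] at hx; exact hx i) hp₀
  rintro ⟨X, _⟩ ⟨⟨hXK, hX, z, rfl⟩, hne⟩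
  obtain ⟨k, rfl⟩ : ∃ k : ℕ, z = k + 1 := by
    have : 0 < z := by
      by_contra! hz
      exact hne (eq_zero_of_mem_coneOver_of_nonpos hPeq hP.isBounded hp₀ hXK (by exact_mod_cast hz))
    exact ⟨(z - 1).toNat, by omega⟩
  push_cast at hXK
  have hXP : X ∈ ((k + 1 : ℕ) : ℝ) • P := by
    push_cast
    exact mem_smul_of_mem_coneOver hPeq (by positivity) hXK
  obtain ⟨y, hy, rfl⟩ := hidp (k + 1) k.succ_pos X ⟨hXP, hX⟩
  obtain ⟨g, ⟨hg, hgZ⟩, r, ⟨hr, -⟩, hgr⟩ := hdec ▸ hy 0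
  refine ⟨(g, a), ⟨mem_intCone_of_mem_floorPoly hPeq hn (Nat.cast_nonneg a) hg, hgZ, a, rfl⟩,
    (∑ j, y j - g, (k : ℝ) + 1 - a),
    ⟨mem_antCone_of_decomposition hPeq (fun j => (hy j).1) hgr hr,
      sub_mem_latticePoints hX hgZ, k + 1 - a, by push_cast; ring⟩, ?_⟩
  simp

theorem stmt_4 {d : ℕ} (hd : 1 ≤ d) (P : Set (Fin d → ℝ))
    (hP : IsLatticePolytope P) (hfull : (interior P).Nonempty)
    {m : ℕ} (n : Fin m → Fin d → ℤ) (h : Fin m → ℤ)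
    (hpres : IsFacetPresentation P n h)
    (a : ℕ) (ha : IsCodegree P a)
    (hidp : IsIDP P)
    (hdec : P ∩ latticePoints d =
      (floorPoly ((a : ℝ) • P) ∩ latticePoints d) +
        (remPoly n h a ∩ latticePoints d)) :
    NGIncl n h :=
  stmt_4_general P hP hfull n h hpres a hidp hdec
end

section
/- Let P ⊆ ℝ^d be a full-dimensional lattice polytope with codegree a satisfying P = ⌊aP⌋ + {P}. Then for every integer k' ≥ a, one has ⌊k'P⌋ = ⌊aP⌋ + (k'−a)P. -/
open Set Pointwise

/-!
A lattice point `x` of `int(k'P)` satisfies `n_F(x) ≥ 1 - k' h_F` for every facet `F`. If `x` were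
not in the compact convex set `⌊aP⌋ + (k' - a)P`, a linear functional `f` would separate it; let
`p` minimise `f` on `P` and write `p = f₀ + r₀` with `f₀ ∈ ⌊aP⌋`, `r₀ ∈ {P}`. For each facet tight
at `p`, `n_F(f₀) = -h_F - n_F(r₀) ≤ 1 - a h_F`, so `x - (f₀ + (k' - a)p)` is a feasible direction
of `P` at `p`, along which `f` cannot decrease: a contradiction. Conversely,
`int(aP) + (k' - a)P ⊆ int(k'P)` and sums of lattice points are lattice points.
-/

open Filter Topology

section Polyhedron

variable {ι E : Type*} [NormedAddCommGroup E] [NormedSpace ℝ E]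

lemma eventually_forall_le_add_mul [Finite ι] {b u v : ι → ℝ} (hu : ∀ i, b i ≤ u i)
    (hv : ∀ i, u i = b i → 0 ≤ v i) : ∀ᶠ t in 𝓝[>] (0 : ℝ), ∀ i, b i ≤ u i + t * v i := by
  refine eventually_all.2 fun i => ?_
  rcases (hu i).eq_or_lt with hbu | hbu
  · filter_upwards [self_mem_nhdsWithin] with t ht
    nlinarith [hv i hbu.symm, mem_Ioi.1 ht]
  · have hlim : Tendsto (fun t : ℝ => u i + t * v i) (𝓝 0) (𝓝 (u i)) :=
      (by fun_prop : Continuous fun t : ℝ => u i + t * v i).tendsto' 0 _ (by simp)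
    exact nhdsWithin_le_nhds ((hlim.eventually (lt_mem_nhds hbu)).mono fun _ ht => ht.le)

lemma convex_setOf_forall_le (g : ι → StrongDual ℝ E) (b : ι → ℝ) :
    Convex ℝ {x | ∀ i, b i ≤ g i x} := by
  simpa only [ofPred_forall, ContinuousLinearMap.coe_coe] using
    convex_iInter fun i => convex_halfSpace_ge (g i : E →ₗ[ℝ] ℝ).isLinear (b i)

lemma IsMinOn.nonneg_of_feasible_direction [Finite ι] {g : ι → StrongDual ℝ E} {b : ι → ℝ}
    {f : StrongDual ℝ E} {p w : E} (hmin : IsMinOn f {x | ∀ i, b i ≤ g i x} p)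
    (hp : ∀ i, b i ≤ g i p) (hw : ∀ i, g i p = b i → 0 ≤ g i w) : 0 ≤ f w := by
  obtain ⟨t, hfeas, ht⟩ :=
    ((eventually_forall_le_add_mul hp hw).and self_mem_nhdsWithin).exists
  have hmem : p + t • w ∈ {x | ∀ i, b i ≤ g i x} := fun i => by simpa using hfeas i
  have hle := hmin hmem
  simp only [mem_ofPred_eq, map_add, map_smul, smul_eq_mul, le_add_iff_nonneg_right] at hle
  exact nonneg_of_mul_nonneg_right hle (mem_Ioi.1 ht)

lemma interior_subset_setOf_lt {g : StrongDual ℝ E} (hg : g ≠ 0) {P : Set E} {b : ℝ}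
    (hP : P ⊆ {x | b ≤ g x}) : interior P ⊆ {x | b < g x} :=
  calc interior P ⊆ interior (g ⁻¹' Ici b) := interior_mono hP
    _ = g ⁻¹' Ioi b := by
      rw [← (g.isOpenMap_of_ne_zero hg).preimage_interior_eq_interior_preimage g.continuous,
        interior_Ici]

lemma setOf_le_subset_add_smul [Finite ι] {g : ι → StrongDual ℝ E} {b β : ι → ℝ} {P F R : Set E}
    (hPeq : P = {x | ∀ i, b i ≤ g i x}) (hPc : IsCompact P) (hPne : P.Nonempty)
    (hFc : IsCompact F) (hFconv : Convex ℝ F) (hR : ∀ r ∈ R, ∀ i, β i ≤ g i r)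
    (hPFR : P = F + R) {c : ℝ} (hc : 0 ≤ c) :
    {x | ∀ i, (1 + c) * b i - β i ≤ g i x} ⊆ F + c • P := by
  intro x hx
  by_contra hxFP
  have hconv : Convex ℝ (F + c • P) :=
    hFconv.add ((hPeq ▸ convex_setOf_forall_le g b).smul c)
  obtain ⟨f, s, hfx, hfFP⟩ :=
    geometric_hahn_banach_point_closed hconv (hFc.add (hPc.smul c)).isClosed hxFP
  obtain ⟨p, hpP, hpmin⟩ := hPc.exists_isMinOn hPne f.continuous.continuousOn
  obtain ⟨f₀, hf₀, r₀, hr₀, hp⟩ := hPFR ▸ hpP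
  have hpb : ∀ i, b i ≤ g i p := by rw [hPeq] at hpP; exact hpP
  -- A constraint tight at `p` gives `g i f₀ = b i - g i r₀ ≤ b i - β i`.
  have hdir : ∀ i, g i p = b i → 0 ≤ g i (x - (f₀ + c • p)) := fun i hi => by
    have hsplit : g i f₀ + g i r₀ = g i p := by rw [← hp, map_add]
    simp only [map_sub, map_add, map_smul, smul_eq_mul]
    nlinarith [hx i, hR r₀ hr₀ i]
  have hfdir := (hPeq ▸ hpmin).nonneg_of_feasible_direction hpb hdir
  have hsep := hfFP _ (add_mem_add hf₀ (smul_mem_smul_set hpP))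
  rw [map_sub] at hfdir
  linarith

end Polyhedron

section Lattice

variable {d : ℕ}

lemma latticePoints_eq_range :
    latticePoints d = range (Pi.map fun _ (z : ℤ) => (z : ℝ)) := by
  ext x
  simp only [latticePoints, mem_ofPred_eq, mem_range, funext_iff, Pi.map_apply,
    eq_comm (a := x _)]
  exact Classical.skolem

lemma add_mem_latticePoints {x y : Fin d → ℝ} (hx : x ∈ latticePoints d)
    (hy : y ∈ latticePoints d) : x + y ∈ latticePoints d := by
  rw [latticePoints_eq_range] at *
  obtain ⟨z, rfl⟩ := hx
  obtain ⟨w, rfl⟩ := hy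
  exact ⟨z + w, by ext; simp⟩

lemma natCast_smul_mem_latticePoints (k : ℕ) {x : Fin d → ℝ} (hx : x ∈ latticePoints d) :
    (k : ℝ) • x ∈ latticePoints d := by
  rw [latticePoints_eq_range] at *
  obtain ⟨z, rfl⟩ := hx
  exact ⟨k • z, by ext; simp⟩

lemma Bornology.IsBounded.finite_inter_latticePoints {S : Set (Fin d → ℝ)}
    (hS : Bornology.IsBounded S) : (S ∩ latticePoints d).Finite := by
  have hemb : Topology.IsClosedEmbedding (Pi.map fun (_ : Fin d) (z : ℤ) => (z : ℝ)) :=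
    .piMap fun _ => Int.isClosedEmbedding_coe_real
  refine ((hemb.isCompact_preimage hS.isCompact_closure).finite_of_discrete.image
    (Pi.map fun _ (z : ℤ) => (z : ℝ))).subset ?_
  rintro x ⟨hxS, hx⟩
  rw [latticePoints_eq_range] at hx
  obtain ⟨z, rfl⟩ := hx
  exact mem_image_of_mem _ (subset_closure hxS)

lemma isCompact_floorPoly {R : Set (Fin d → ℝ)} (hR : Bornology.IsBounded R) :
    IsCompact (floorPoly R) :=
  (hR.subset interior_subset).finite_inter_latticePoints.isCompact_convexHull (𝕜 := ℝ)

lemma add_one_le_pairing_of_lt {n : Fin d → ℤ} {x : Fin d → ℝ} (hx : x ∈ latticePoints d)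
    {c : ℤ} (hc : (c : ℝ) < pairing n x) : (c : ℝ) + 1 ≤ pairing n x := by
  rw [latticePoints_eq_range] at hx
  obtain ⟨z, rfl⟩ := hx
  have hz : pairing n (Pi.map (fun _ (z : ℤ) => (z : ℝ)) z) = ((∑ i, n i * z i : ℤ) : ℝ) := by
    simp [pairing]
  rw [hz] at hc ⊢
  exact_mod_cast Int.add_one_le_of_lt (by exact_mod_cast hc)

end Lattice

section FloorPolytope

variable {d m : ℕ}

def pairingCLM (n : Fin d → ℤ) : StrongDual ℝ (Fin d → ℝ) :=
  ∑ i, (n i : ℝ) • ContinuousLinearMap.proj i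

@[simp]
lemma pairingCLM_apply (n : Fin d → ℤ) (x : Fin d → ℝ) : pairingCLM n x = pairing n x := by
  simp [pairingCLM, pairing]

lemma pairingCLM_ne_zero {n : Fin d → ℤ} (hn : n ≠ 0) : pairingCLM n ≠ 0 := by
  obtain ⟨j, hj⟩ := Function.ne_iff.1 hn
  refine DFunLike.ne_iff.2 ⟨Pi.single j 1, ?_⟩
  simpa [pairing, Pi.single_apply] using hj

lemma floorPoly_add_smul_subset {P V : Set (Fin d → ℝ)} (hV : V ⊆ latticePoints d)
    (hPV : P = convexHull ℝ V) {a k : ℕ} (hak : a ≤ k) :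
    floorPoly ((a : ℝ) • P) + ((k - a : ℕ) : ℝ) • P ⊆ floorPoly ((k : ℝ) • P) := by
  have hPconv : Convex ℝ P := hPV ▸ convex_convexHull ℝ V
  have hint : interior ((a : ℝ) • P) + ((k - a : ℕ) : ℝ) • P ⊆ interior ((k : ℝ) • P) := by
    conv_rhs => rw [← Nat.add_sub_of_le hak, Nat.cast_add,
      hPconv.add_smul a.cast_nonneg (k - a).cast_nonneg]
    exact subset_interior_add_left
  calc floorPoly ((a : ℝ) • P) + ((k - a : ℕ) : ℝ) • P
      = convexHull ℝ ((interior ((a : ℝ) • P) ∩ latticePoints d) + ((k - a : ℕ) : ℝ) • V) := by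
        rw [convexHull_add, convexHull_smul, ← hPV, floorPoly]
    _ ⊆ floorPoly ((k : ℝ) • P) := by
      refine convexHull_mono ?_
      rintro _ ⟨s, ⟨hs, hs_lat⟩, _, ⟨v, hv, rfl⟩, rfl⟩
      refine ⟨hint (add_mem_add hs (smul_mem_smul_set (hPV ▸ subset_convexHull ℝ V hv))), ?_⟩
      exact add_mem_latticePoints hs_lat (natCast_smul_mem_latticePoints _ (hV hv))

lemma floorPoly_smul_subset {P : Set (Fin d → ℝ)} {n : Fin m → Fin d → ℤ} {h : Fin m → ℤ}
    (hPeq : P = {x | ∀ i, pairing (n i) x ≥ -(h i : ℝ)}) (hn : ∀ i, n i ≠ 0)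
    (hPc : IsCompact P) {a : ℕ} (hdecomp : P = floorPoly ((a : ℝ) • P) + remPoly n h a)
    {k : ℕ} (hak : a ≤ k) (hk : k ≠ 0) :
    floorPoly ((k : ℝ) • P) ⊆ floorPoly ((a : ℝ) • P) + ((k - a : ℕ) : ℝ) • P := by
  have hPclm : P = {x | ∀ i, -(h i : ℝ) ≤ pairingCLM (n i) x} := by
    simpa only [pairingCLM_apply, ge_iff_le] using hPeq
  have hR : ∀ r ∈ remPoly n h a, ∀ i, ((a : ℝ) - 1) * h i - 1 ≤ pairingCLM (n i) r :=
    fun r hr => convexHull_min (fun x hx i => by simpa using hx.2 i)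
      (convex_setOf_forall_le _ _) hr
  refine convexHull_min ?_
    ((convex_convexHull ℝ _).add ((hPclm ▸ convex_setOf_forall_le _ _).smul _))
  rintro x ⟨hx, hx_lat⟩
  obtain ⟨y, hy, rfl⟩ := interior_smul₀ (Nat.cast_ne_zero.2 hk : (k : ℝ) ≠ 0) P ▸ hx
  refine setOf_le_subset_add_smul hPclm hPc ⟨y, interior_subset hy⟩
    (isCompact_floorPoly (hPc.smul _).isBounded) (convex_convexHull ℝ _) hR hdecomp
    (Nat.cast_nonneg _) fun i => ?_
  have hy_i : -(h i : ℝ) < pairing (n i) y := by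
    simpa using
      interior_subset_setOf_lt (pairingCLM_ne_zero (hn i)) (hPclm.le.trans fun _ hz => hz i) hy
  have hky : pairing (n i) ((k : ℝ) • y) = k * pairing (n i) y := by
    simp only [← pairingCLM_apply, map_smul, smul_eq_mul]
  have hlat := add_one_le_pairing_of_lt hx_lat (c := -(k * h i)) (by
    push_cast; rw [hky]; nlinarith [(Nat.cast_pos.2 (Nat.pos_of_ne_zero hk) : (0 : ℝ) < k)])
  rw [pairingCLM_apply, Nat.cast_sub hak]
  push_cast at hlat
  linarith

end FloorPolytope

theorem stmt_6_general {d : ℕ} (P : Set (Fin d → ℝ))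
    (hP : IsLatticePolytope P)
    {m : ℕ} (n : Fin m → Fin d → ℤ) (h : Fin m → ℤ)
    (hpres : IsFacetPresentation P n h)
    (a : ℕ) (ha : IsCodegree P a)
    (hdecomp : P = floorPoly ((a : ℝ) • P) + remPoly n h a) :
    ∀ k' : ℕ, a ≤ k' →
      floorPoly ((k' : ℝ) • P) =
        floorPoly ((a : ℝ) • P) + ((k' - a : ℕ) : ℝ) • P := by
  intro k' hk'
  obtain ⟨V, hV, hPV⟩ := hP
  obtain ⟨hPeq, hprim, -⟩ := hpres
  have hn : ∀ i, n i ≠ 0 := fun i hi => by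
    simpa [hi, Finset.gcd_eq_zero_iff.2] using hprim i
  have hPc : IsCompact P := hPV ▸ V.finite_toSet.isCompact_convexHull (𝕜 := ℝ)
  have hk'0 : k' ≠ 0 := by have := ha.1; omega
  exact (floorPoly_smul_subset hPeq hn hPc hdecomp hk' hk'0).antisymm
    (floorPoly_add_smul_subset hV hPV hk')

theorem stmt_6 {d : ℕ} (hd : 1 ≤ d) (P : Set (Fin d → ℝ))
    (hP : IsLatticePolytope P) (hfull : (interior P).Nonempty)
    {m : ℕ} (n : Fin m → Fin d → ℤ) (h : Fin m → ℤ)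
    (hpres : IsFacetPresentation P n h)
    (a : ℕ) (ha : IsCodegree P a)
    (hdecomp : P = floorPoly ((a : ℝ) • P) + remPoly n h a) :
    ∀ k' : ℕ, a ≤ k' →
      floorPoly ((k' : ℝ) • P) =
        floorPoly ((a : ℝ) • P) + ((k' - a : ℕ) : ℝ) • P :=
  stmt_6_general P hP n h hpres a ha hdecomp
end
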